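/- The pressure-system matrix is symmetric positive definite: define A by Σ_j A_ij q_j = |ω_i| ( q_i/(ρ_i c_i² δt²) - ⟨div* (⟨∇q⟩/ρ)⟩_i ) where ⟨∇q⟩ is the discrete gradient and ⟨div*⟩ the negative-adjoint divergence. Then for all vectors φ, θ: Σ_{ij} φ_i A_ij θ_j = Σ_i (|ω_i|/ρ_i)( φ_i θ_i/(c_i δt)² + ⟨∇φ⟩_i · ⟨∇θ⟩_i ), hence A is symmetric and positive definite (assuming |ω_i|, ρ_i, c_i, δt > 0 and that ⟨∇·⟩ applied to constants is zero, with the quadratic form strictly positive since the mass term never vanishes for φ ≠ 0). -/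

import Mathlib

open scoped RealInnerProductSpace

/-- Discrete gradient of a scalar field on a Voronoi tessellation. -/
noncomputable def vGrad {N : ℕ} (x : Fin N → EuclideanSpace ℝ (Fin 2))
    (A : Fin N → ℝ) (Γ : Fin N → Fin N → ℝ)
    (m : Fin N → Fin N → EuclideanSpace ℝ (Fin 2))
    (q : Fin N → ℝ) (i : Fin N) : EuclideanSpace ℝ (Fin 2) :=
  -((A i)⁻¹) • ∑ j, ((Γ i j / dist (x i) (x j)) * (q i - q j)) • (m i j - x i)

/-- Negative-adjoint discrete divergence of a vector field. -/
noncomputable def vDivStar {N : ℕ} (x : Fin N → EuclideanSpace ℝ (Fin 2))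
    (A : Fin N → ℝ) (Γ : Fin N → Fin N → ℝ)
    (m : Fin N → Fin N → EuclideanSpace ℝ (Fin 2))
    (U : Fin N → EuclideanSpace ℝ (Fin 2)) (i : Fin N) : ℝ :=
  (A i)⁻¹ * ∑ j, (Γ i j / dist (x i) (x j)) *
    (⟪U i - U j, m i j - (2:ℝ)⁻¹ • (x i + x j)⟫ - ⟪(2:ℝ)⁻¹ • (U i + U j), x i - x j⟫)

/-- The pressure-system operator `(Aop q)_i = |ω_i|(q_i/(ρ_i c_i² δt²) - ⟨div*(⟨∇q⟩/ρ)⟩_i)`. -/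
noncomputable def Aop {N : ℕ} (x : Fin N → EuclideanSpace ℝ (Fin 2))
    (A ρ c : Fin N → ℝ) (δt : ℝ) (Γ : Fin N → Fin N → ℝ)
    (m : Fin N → Fin N → EuclideanSpace ℝ (Fin 2)) (q : Fin N → ℝ) (i : Fin N) : ℝ :=
  A i * (q i / (ρ i * (c i)^2 * δt^2)
    - vDivStar x A Γ m (fun j => (ρ j)⁻¹ • vGrad x A Γ m q j) i)

section PressureForm

variable {N : ℕ} (x : Fin N → EuclideanSpace ℝ (Fin 2)) (A ρ c : Fin N → ℝ) (δt : ℝ)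
  (Γ : Fin N → Fin N → ℝ) (m : Fin N → Fin N → EuclideanSpace ℝ (Fin 2))

noncomputable def pressureForm (φ θ : Fin N → ℝ) : ℝ :=
  ∑ i, (A i / ρ i) * (φ i * θ i / (c i * δt) ^ 2
    + ⟪vGrad x A Γ m φ i, vGrad x A Γ m θ i⟫)

/-- The duality moves the stiffness term `-⟨div*(⟨∇θ⟩/ρ)⟩` of `Aop θ` onto `φ`. -/
theorem sum_mul_Aop_eq_pressureForm
    (hdual : ∀ (φ : Fin N → ℝ) (U : Fin N → EuclideanSpace ℝ (Fin 2)),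
      (∑ i, A i * ⟪vGrad x A Γ m φ i, U i⟫) = -(∑ i, A i * φ i * vDivStar x A Γ m U i))
    (φ θ : Fin N → ℝ) :
    ∑ i, φ i * Aop x A ρ c δt Γ m θ i = pressureForm x A ρ c δt Γ m φ θ := by
  have stiffness :
      ∑ i, A i * φ i * vDivStar x A Γ m (fun j => (ρ j)⁻¹ • vGrad x A Γ m θ j) i
        = -∑ i, (A i / ρ i) * ⟪vGrad x A Γ m φ i, vGrad x A Γ m θ i⟫ := by
    rw [← neg_eq_iff_eq_neg.mpr (hdual φ _)]
    congr 1
    refine Finset.sum_congr rfl fun i _ => ?_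
    rw [real_inner_smul_right, div_eq_mul_inv]
    ring
  calc ∑ i, φ i * Aop x A ρ c δt Γ m θ i
      = ∑ i, (A i / ρ i) * (φ i * θ i / (c i * δt) ^ 2)
          - ∑ i, A i * φ i *
              vDivStar x A Γ m (fun j => (ρ j)⁻¹ • vGrad x A Γ m θ j) i := by
        rw [← Finset.sum_sub_distrib]
        refine Finset.sum_congr rfl fun i _ => ?_
        simp only [Aop, div_eq_mul_inv, mul_inv, mul_pow]
        ring
    _ = pressureForm x A ρ c δt Γ m φ θ := by
        rw [stiffness, sub_neg_eq_add, ← Finset.sum_add_distrib, pressureForm]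
        simp only [mul_add]

theorem pressureForm_comm (φ θ : Fin N → ℝ) :
    pressureForm x A ρ c δt Γ m φ θ = pressureForm x A ρ c δt Γ m θ φ := by
  unfold pressureForm
  refine Finset.sum_congr rfl fun i _ => ?_
  rw [real_inner_comm, mul_comm (φ i)]

-- The mass term alone makes the form definite; the gradient term is only nonnegative.
theorem pressureForm_self_pos (hA : ∀ i, 0 < A i) (hρ : ∀ i, 0 < ρ i) (hc : ∀ i, 0 < c i)
    (hδt : 0 < δt) {φ : Fin N → ℝ} (hφ : φ ≠ 0) :
    0 < pressureForm x A ρ c δt Γ m φ φ := by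
  obtain ⟨i₀, hi₀⟩ := Function.ne_iff.mp hφ
  have mass_nonneg (i : Fin N) : 0 ≤ φ i * φ i / (c i * δt) ^ 2 :=
    div_nonneg (mul_self_nonneg _) (sq_nonneg _)
  have mass_pos : 0 < φ i₀ * φ i₀ / (c i₀ * δt) ^ 2 :=
    div_pos (mul_self_pos.mpr hi₀) (pow_pos (mul_pos (hc i₀) hδt) 2)
  refine Finset.sum_pos' (fun i _ => ?_) ⟨i₀, Finset.mem_univ i₀, ?_⟩
  · exact mul_nonneg (div_pos (hA i) (hρ i)).le
      (add_nonneg (mass_nonneg i) real_inner_self_nonneg)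
  · exact mul_pos (div_pos (hA i₀) (hρ i₀))
      (add_pos_of_pos_of_nonneg mass_pos real_inner_self_nonneg)

end PressureForm

theorem pressure_matrix_spd_general {N : ℕ}
    (x : Fin N → EuclideanSpace ℝ (Fin 2))
    (A ρ c : Fin N → ℝ) (δt : ℝ)
    (hA : ∀ i, 0 < A i) (hρ : ∀ i, 0 < ρ i) (hc : ∀ i, 0 < c i) (hδt : 0 < δt)
    (Γ : Fin N → Fin N → ℝ)
    (m : Fin N → Fin N → EuclideanSpace ℝ (Fin 2))
    -- duality between the discrete gradient and the negative-adjoint divergence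
    (hdual : ∀ (φ : Fin N → ℝ) (U : Fin N → EuclideanSpace ℝ (Fin 2)),
      (∑ i, A i * ⟪vGrad x A Γ m φ i, U i⟫)
        = -(∑ i, A i * φ i * vDivStar x A Γ m U i)) :
    (∀ φ θ : Fin N → ℝ,
      (∑ i, φ i * Aop x A ρ c δt Γ m θ i)
        = ∑ i, (A i / ρ i) * (φ i * θ i / (c i * δt)^2
            + ⟪vGrad x A Γ m φ i, vGrad x A Γ m θ i⟫)) ∧
    (∀ φ θ : Fin N → ℝ,
      (∑ i, φ i * Aop x A ρ c δt Γ m θ i) = ∑ i, θ i * Aop x A ρ c δt Γ m φ i) ∧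
    (∀ φ : Fin N → ℝ, φ ≠ 0 → 0 < ∑ i, φ i * Aop x A ρ c δt Γ m φ i) := by
  have energy := sum_mul_Aop_eq_pressureForm x A ρ c δt Γ m hdual
  refine ⟨energy, fun φ θ => ?_, fun φ hφ => ?_⟩
  · rw [energy, energy, pressureForm_comm]
  · rw [energy]
    exact pressureForm_self_pos x A ρ c δt Γ m hA hρ hc hδt hφ

/-- The pressure-system matrix is symmetric positive definite: its quadratic form is
`∑_i (|ω_i|/ρ_i)(φ_i θ_i/(c_i δt)² + ⟨∇φ⟩_i · ⟨∇θ⟩_i)`, hence symmetric and, since the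
mass term never vanishes for `φ ≠ 0`, positive definite. -/
theorem pressure_matrix_spd {N : ℕ}
    (x : Fin N → EuclideanSpace ℝ (Fin 2))
    (A ρ c : Fin N → ℝ) (δt : ℝ)
    (hA : ∀ i, 0 < A i) (hρ : ∀ i, 0 < ρ i) (hc : ∀ i, 0 < c i) (hδt : 0 < δt)
    (Γ : Fin N → Fin N → ℝ) (hΓnn : ∀ i j, 0 ≤ Γ i j)
    (m : Fin N → Fin N → EuclideanSpace ℝ (Fin 2))
    -- duality between the discrete gradient and the negative-adjoint divergence
    (hdual : ∀ (φ : Fin N → ℝ) (U : Fin N → EuclideanSpace ℝ (Fin 2)),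
      (∑ i, A i * ⟪vGrad x A Γ m φ i, U i⟫)
        = -(∑ i, A i * φ i * vDivStar x A Γ m U i)) :
    (∀ φ θ : Fin N → ℝ,
      (∑ i, φ i * Aop x A ρ c δt Γ m θ i)
        = ∑ i, (A i / ρ i) * (φ i * θ i / (c i * δt)^2
            + ⟪vGrad x A Γ m φ i, vGrad x A Γ m θ i⟫)) ∧
    (∀ φ θ : Fin N → ℝ,
      (∑ i, φ i * Aop x A ρ c δt Γ m θ i) = ∑ i, θ i * Aop x A ρ c δt Γ m φ i) ∧
    (∀ φ : Fin N → ℝ, φ ≠ 0 → 0 < ∑ i, φ i * Aop x A ρ c δt Γ m φ i) :=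
  pressure_matrix_spd_general x A ρ c δt hA hρ hc hδt Γ m hdual
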